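/- Let G_σ be a sign-connected signed graph with at least three vertices whose underlying graph is 2-connected (a block). Then G_σ has no sign articulation vertex if and only if G_σ − x is unbalanced for every vertex x. -/

import Mathlib

namespace SignedGraph

variable {V : Type*}

/-- The sign of a walk in a signed graph: the product of its edge signs. -/
def walkSign {G : SimpleGraph V} (σ : V → V → ℤˣ) : {u v : V} → G.Walk u v → ℤˣ
  | _, _, SimpleGraph.Walk.nil => 1
  | u, _, SimpleGraph.Walk.cons (v := w) _ p => σ u w * walkSign σ p

/-- A signed graph is balanced if every cycle has positive sign. -/
def Balanced (G : SimpleGraph V) (σ : V → V → ℤˣ) : Prop :=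
  ∀ ⦃u : V⦄ (c : G.Walk u u), c.IsCycle → walkSign σ c = 1

/-- Sign connection: every two distinct vertices are joined both by a
positive and by a negative walk. -/
def SignConnected (G : SimpleGraph V) (σ : V → V → ℤˣ) : Prop :=
  ∀ x y : V, x = y ∨
    ((∃ p : G.Walk x y, walkSign σ p = 1) ∧ (∃ p : G.Walk x y, walkSign σ p = -1))

open Classical in
/-- Switching by a vertex subset `W`: negate the signs of edges with exactly
one endpoint in `W`. -/
noncomputable def switchSign (W : Set V) (σ : V → V → ℤˣ) (u v : V) : ℤˣ :=
  if Xor' (u ∈ W) (v ∈ W) then -σ u v else σ u v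

end SignedGraph

open SignedGraph

/-!
Deleting a vertex of a block leaves a connected graph, so it suffices that a connected signed
graph on at least two vertices is sign connected iff it is unbalanced. In a balanced graph every
closed walk is positive (bypassing a repeated vertex splits off an edge followed by a path, which
is either a cycle or an edge traversed twice), so all walks between two vertices have the same
sign. Conversely, splicing a negative cycle into a walk from `a` to `b` reverses its sign.
-/

namespace SignedGraph

open SimpleGraph Walk

variable {V : Type*} {G : SimpleGraph V} {σ : V → V → ℤˣ}

@[simp]
lemma walkSign_nil {u : V} : walkSign σ (nil : G.Walk u u) = 1 := rfl

@[simp]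
lemma walkSign_cons {u v w : V} (h : G.Adj u v) (p : G.Walk v w) :
    walkSign σ (cons h p) = σ u v * walkSign σ p := rfl

@[simp]
lemma walkSign_append {u v w : V} (p : G.Walk u v) (q : G.Walk v w) :
    walkSign σ (p.append q) = walkSign σ p * walkSign σ q := by
  induction p with
  | nil => simp
  | cons h p ih => simp [ih, mul_assoc]

lemma walkSign_reverse (hσ : ∀ u v, σ u v = σ v u) {u v : V} (p : G.Walk u v) :
    walkSign σ p.reverse = walkSign σ p := by
  induction p with
  | nil => rfl
  | cons h p ih => simp [ih, hσ, mul_comm]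

lemma Balanced.walkSign_cons_of_isPath (hσ : ∀ u v, σ u v = σ v u) (hbal : Balanced G σ)
    {u v : V} (h : G.Adj u v) {p : G.Walk v u} (hp : p.IsPath) :
    walkSign σ (cons h p) = 1 := by
  by_cases he : s(u, v) ∈ p.edges
  · cases p with
    | nil => exact absurd rfl h.ne
    | @cons _ y _ h' q =>
      rw [edges_cons, List.mem_cons] at he
      rcases he with he | he
      · obtain rfl : u = y := by
          rcases Sym2.eq_iff.mp he with ⟨huv, -⟩ | ⟨huy, -⟩
          · exact absurd huv h.ne
          · exact huy
        obtain rfl : q = nil := (isPath_iff_nil.mp hp.of_cons).eq_nil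
        simp [hσ u v]
      · have hv : v ∈ q.support := fst_mem_support_of_mem_edges q (Sym2.eq_swap ▸ he)
        exact absurd hv ((cons_isPath_iff h' q).mp hp).2
  · exact hbal _ ((cons_isCycle_iff p h).mpr ⟨hp, he⟩)

lemma Balanced.walkSign_bypass [DecidableEq V] (hσ : ∀ u v, σ u v = σ v u)
    (hbal : Balanced G σ) {u v : V} (p : G.Walk u v) :
    walkSign σ p.bypass = walkSign σ p := by
  induction p with
  | nil => rfl
  | @cons u w v h p ih =>
    simp only [bypass]
    split_ifs with hu
    · have hloop : walkSign σ (cons h (p.bypass.takeUntil u hu)) = 1 :=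
        hbal.walkSign_cons_of_isPath hσ h (p.bypass_isPath.takeUntil hu)
      have hsplit := congrArg (walkSign σ) (p.bypass.take_spec hu)
      rw [walkSign_append] at hsplit
      rw [walkSign_cons, ← ih, ← hsplit, ← mul_assoc, ← walkSign_cons h, hloop, one_mul]
    · simp [ih]

lemma Balanced.walkSign_eq (hσ : ∀ u v, σ u v = σ v u) (hbal : Balanced G σ) {u v : V}
    (p q : G.Walk u v) : walkSign σ p = walkSign σ q := by
  classical
  have hloop : walkSign σ (p.append q.reverse) = 1 := by
    rw [← hbal.walkSign_bypass hσ, (isPath_iff_nil.mp (bypass_isPath _)).eq_nil, walkSign_nil]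
  rw [walkSign_append, walkSign_reverse hσ] at hloop
  exact mul_eq_one_iff_eq_inv.mp hloop |>.trans (Int.units_inv_eq_self _)

lemma SignConnected.not_balanced [Nontrivial V] (hσ : ∀ u v, σ u v = σ v u)
    (hsc : SignConnected G σ) : ¬ Balanced G σ := by
  intro hbal
  obtain ⟨a, b, hab⟩ := exists_pair_ne V
  obtain ⟨⟨p, hp⟩, ⟨q, hq⟩⟩ := (hsc a b).resolve_left hab
  have := hbal.walkSign_eq hσ p q
  rw [hp, hq] at this
  exact absurd this (by decide)

lemma signConnected_of_not_balanced (hconn : G.Preconnected) (hub : ¬ Balanced G σ) :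
    SignConnected G σ := by
  intro a b
  refine (em (a = b)).imp id fun _ => ?_
  obtain ⟨w, c, -, hc⟩ : ∃ (w : V) (c : G.Walk w w), c.IsCycle ∧ walkSign σ c ≠ 1 := by
    simpa [Balanced] using hub
  have hcneg : walkSign σ c = -1 := (Int.units_eq_one_or _).resolve_left hc
  let p : G.Walk a b := (hconn a w).some.append (hconn w b).some
  let q : G.Walk a b := (hconn a w).some.append (c.append (hconn w b).some)
  have hq : walkSign σ q = -walkSign σ p := by simp [p, q, hcneg]
  rcases Int.units_eq_one_or (walkSign σ p) with hp | hp
  · exact ⟨⟨p, hp⟩, ⟨q, by rw [hq, hp]⟩⟩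
  · exact ⟨⟨q, by rw [hq, hp, neg_neg]⟩, ⟨p, hp⟩⟩

theorem signConnected_iff_not_balanced [Nontrivial V] (hσ : ∀ u v, σ u v = σ v u)
    (hconn : G.Preconnected) : SignConnected G σ ↔ ¬ Balanced G σ :=
  ⟨SignConnected.not_balanced hσ, signConnected_of_not_balanced hconn⟩

end SignedGraph

lemma nontrivial_compl_singleton {V : Type*} [Fintype V] (hcard : 3 ≤ Fintype.card V) (x : V) :
    Nontrivial ({x}ᶜ : Set V) := by
  classical
  rw [← Fintype.one_lt_card_iff_nontrivial, Fintype.card_compl_set, Set.card_singleton]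
  omega

theorem stmt_13_general {V : Type*} [Fintype V] (G : SimpleGraph V) (σ : V → V → ℤˣ)
    (hσ : ∀ u v : V, σ u v = σ v u)
    (hcard : 3 ≤ Fintype.card V)
    (hblock : ∀ x : V, (G.induce {x}ᶜ).Connected) :
    (∀ x : V, SignConnected (G.induce {x}ᶜ) (fun a b => σ a.1 b.1)) ↔
      ∀ x : V, ¬ Balanced (G.induce {x}ᶜ) (fun a b => σ a.1 b.1) :=
  forall_congr' fun x =>
    have := nontrivial_compl_singleton hcard x
    signConnected_iff_not_balanced (fun u v => hσ u v) (hblock x).preconnected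

/-- A sign-connected block with at least three vertices has no sign
articulation vertex iff deleting any vertex leaves an unbalanced signed
graph. -/
theorem stmt_13 {V : Type*} [Fintype V] (G : SimpleGraph V) (σ : V → V → ℤˣ)
    (hσ : ∀ u v : V, σ u v = σ v u) (hsc : SignConnected G σ)
    (hcard : 3 ≤ Fintype.card V) (hconn : G.Connected)
    (hblock : ∀ x : V, (G.induce {x}ᶜ).Connected) :
    (∀ x : V, SignConnected (G.induce {x}ᶜ) (fun a b => σ a.1 b.1)) ↔
      ∀ x : V, ¬ Balanced (G.induce {x}ᶜ) (fun a b => σ a.1 b.1) :=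
  stmt_13_general G σ hσ hcard hblock
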